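/- Let σ = co({x_j}_{j=0}^n) ⊂ ℝ^n be a simplex with affinely independent vertices, g : ℝ^n → ℝ^n twice continuously differentiable on an open set containing σ with |∂²g^{(p)}/∂x^{(q)}∂x^{(r)}(ξ)| ≤ β for all ξ ∈ σ and all p, q, r, V : ℝ^n → ℝ affine with gradient ∇V, and l ∈ ℝ^n with l ≥ |∇V| entrywise. For each vertex j set d_j := g(x_j)ᵀ∇V + c_j β 1_nᵀ l. Suppose a, b₁ > 0 with b₁‖x_j‖^a ≤ V(x_j) for every vertex, that V(x_j) = 0 and d_j = 0 whenever x_j = 0, that d_j < 0 for every vertex with x_j ≠ 0, and that at least one vertex is nonzero. Set b̂₂ := min{ −d_j / V(x_j) : x_j ≠ 0 }. Then b̂₂ > 0 and the Dini derivative of V along g satisfies D⁺V(x) ≤ −b̂₂ · V(x) for every x ∈ σ. -/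

import Mathlib

/-!
Since `V` is affine, `D⁺V(y) = ∇V ⬝ g(y)`. Write `y = ∑ α_j x_j` as a convex combination of the
vertices. Expanding each component of `g` to second order at `y` and averaging with the weights
`α_j` kills the linear terms, so `g(y)` differs from `∑ α_j g(x_j)` componentwise by at most
`β n / 2 ∑ α_j ‖x_j - y‖²`. The barycenter `y` minimises the weighted second moment, so this
spread is at most `∑ α_j ‖x_j - x_0‖²`, which the constants `c_j` dominate. Hence
`∇V ⬝ g(y) ≤ ∑ α_j d_j`, and since `b̂₂` is a minimum, `d_j ≤ -b̂₂ V(x_j)` at every vertex;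
averaging once more and using that `V` is affine gives `∇V ⬝ g(y) ≤ -b̂₂ V(y)`.
-/

open Filter Topology Set
open scoped BigOperators

/-- Second partial derivative `∂²φ/∂x^{(q)}∂x^{(r)}` of a scalar function on ℝⁿ. -/
noncomputable def secondPartial {n : ℕ} (φ : EuclideanSpace ℝ (Fin n) → ℝ) (q r : Fin n)
    (ξ : EuclideanSpace ℝ (Fin n)) : ℝ :=
  fderiv ℝ (fun y => fderiv ℝ φ y (EuclideanSpace.single r 1)) ξ (EuclideanSpace.single q 1)

/-- Dini derivative of `V` at `y` along the vector field `g`. -/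
noncomputable def diniDeriv {n : ℕ} (V : EuclideanSpace ℝ (Fin n) → ℝ)
    (g : EuclideanSpace ℝ (Fin n) → EuclideanSpace ℝ (Fin n))
    (y : EuclideanSpace ℝ (Fin n)) : EReal :=
  Filter.limsup (fun h : ℝ => (((V (y + h • g y) - V y) / h : ℝ) : EReal)) (𝓝[>] (0 : ℝ))

lemma abs_sub_sub_deriv_le_of_abs_deriv2_le {ψ ψ' ψ'' : ℝ → ℝ} {M : ℝ}
    (hψ : ∀ t ∈ Icc (0 : ℝ) 1, HasDerivAt ψ (ψ' t) t)
    (hψ' : ∀ t ∈ Icc (0 : ℝ) 1, HasDerivAt ψ' (ψ'' t) t)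
    (hM : ∀ t ∈ Icc (0 : ℝ) 1, |ψ'' t| ≤ M) :
    |ψ 1 - ψ 0 - ψ' 0| ≤ M / 2 := by
  have hψ'_sub : ∀ t ∈ Icc (0 : ℝ) 1, ‖ψ' t - ψ' 0‖ ≤ M * (t - 0) :=
    norm_image_sub_le_of_norm_deriv_le_segment' (fun t ht => (hψ' t ht).hasDerivWithinAt)
      (fun t ht => hM t (Ico_subset_Icc_self ht))
  have hbound := image_norm_le_of_norm_deriv_right_le_deriv_boundary
    (f := fun t => ψ t - ψ 0 - t * ψ' 0) (f' := fun t => ψ' t - ψ' 0)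
    (B := fun t => M * t ^ 2 / 2) (B' := fun t => M * t) (a := 0) (b := 1)
    (HasDerivAt.continuousOn fun t ht => ((hψ t ht).sub_const _).sub (hasDerivAt_mul_const _))
    (fun t ht => (((hψ t (Ico_subset_Icc_self ht)).sub_const _).sub
      (hasDerivAt_mul_const _)).hasDerivWithinAt)
    (by simp)
    (fun t => (((hasDerivAt_pow 2 t).const_mul M).div_const 2).congr_deriv (by norm_num; ring))
    (fun t ht => by simpa using hψ'_sub t (Ico_subset_Icc_self ht))
    (right_mem_Icc.2 zero_le_one)
  simpa using hbound

section Barycenter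

variable {ι : Type*} [Fintype ι]

lemma sum_smul_sub_sum_smul_eq_zero {R M : Type*} [Ring R] [AddCommGroup M] [Module R M]
    {α : ι → R} (hα : ∑ j, α j = 1) (x : ι → M) :
    ∑ j, α j • (x j - ∑ i, α i • x i) = 0 := by
  simp only [smul_sub, Finset.sum_sub_distrib, ← Finset.sum_smul, hα, one_smul, sub_self]

lemma sum_mul_norm_sub_sq_eq {E : Type*} [NormedAddCommGroup E] [InnerProductSpace ℝ E]
    {α : ι → ℝ} (hα : ∑ j, α j = 1) (x : ι → E) (z : E) :
    ∑ j, α j * ‖x j - z‖ ^ 2 =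
      ∑ j, α j * ‖x j - ∑ i, α i • x i‖ ^ 2 + ‖∑ i, α i • x i - z‖ ^ 2 := by
  have hcross : ∑ j, α j * inner ℝ (x j - ∑ i, α i • x i) (∑ i, α i • x i - z) = 0 := by
    simp only [← real_inner_smul_left, ← sum_inner]
    rw [sum_smul_sub_sum_smul_eq_zero hα, inner_zero_left]
  have hsplit : ∀ j, ‖x j - z‖ ^ 2 = ‖x j - ∑ i, α i • x i‖ ^ 2
      + 2 * inner ℝ (x j - ∑ i, α i • x i) (∑ i, α i • x i - z) + ‖∑ i, α i • x i - z‖ ^ 2 :=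
    fun j => by rw [← norm_add_sq_real, sub_add_sub_cancel]
  simp only [hsplit, mul_add, Finset.sum_add_distrib, ← Finset.sum_mul, hα, one_mul,
    mul_left_comm _ (2 : ℝ), ← Finset.mul_sum, hcross, mul_zero, add_zero]

lemma exists_weights_of_mem_convexHull_range {E : Type*} [AddCommGroup E] [Module ℝ E]
    {x : ι → E} {y : E} (hy : y ∈ convexHull ℝ (range x)) :
    ∃ α : ι → ℝ, (∀ j, 0 ≤ α j) ∧ ∑ j, α j = 1 ∧ ∑ j, α j • x j = y := by
  classical
  obtain ⟨s, w, hw0, hw1, rfl⟩ := (convexHull_range_eq_exists_affineCombination x).subset hy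
  refine ⟨fun j => if j ∈ s then w j else 0, fun j => ?_, ?_, ?_⟩
  · dsimp only
    split_ifs with h
    exacts [hw0 j h, le_rfl]
  · rw [Finset.sum_ite_mem, Finset.univ_inter, hw1]
  · simp only [ite_smul, zero_smul, Finset.sum_ite_mem, Finset.univ_inter]
    exact (s.affineCombination_eq_linear_combination x w hw1).symm

end Barycenter

lemma sInf_neg_div_pos_and_le {ι : Type*} [Finite ι] {P : ι → Prop} {d v : ι → ℝ}
    (hv : ∀ j, P j → 0 < v j) (hd : ∀ j, P j → d j < 0) (hP : ∃ j, P j) :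
    0 < sInf {t | ∃ j, P j ∧ t = -d j / v j} ∧
      ∀ j, P j → d j ≤ -sInf {t | ∃ j, P j ∧ t = -d j / v j} * v j := by
  set T := {t | ∃ j, P j ∧ t = -d j / v j}
  have hT : T.Finite := (finite_range fun j => -d j / v j).subset fun t ⟨j, _, ht⟩ => ⟨j, ht.symm⟩
  obtain ⟨j₀, hj₀⟩ := hP
  obtain ⟨j, hj, hmin⟩ : sInf T ∈ T := Nonempty.csInf_mem ⟨_, j₀, hj₀, rfl⟩ hT
  refine ⟨hmin ▸ div_pos (neg_pos.2 (hd j hj)) (hv j hj), fun k hk => ?_⟩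
  have := csInf_le hT.bddBelow ⟨k, hk, rfl⟩
  rw [le_div_iff₀ (hv k hk)] at this
  linarith

section EuclideanSpace

variable {n : ℕ} {ι : Type*} [Fintype ι]

lemma EuclideanSpace.clm_apply_eq_sum {F : Type*} [NormedAddCommGroup F] [NormedSpace ℝ F]
    (L : EuclideanSpace ℝ (Fin n) →L[ℝ] F) (v : EuclideanSpace ℝ (Fin n)) :
    L v = ∑ r, v r • L (EuclideanSpace.single r 1) := by
  conv_lhs => rw [← (EuclideanSpace.basisFun (Fin n) ℝ).sum_repr v]
  simp [EuclideanSpace.basisFun_apply]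

lemma EuclideanSpace.sq_sum_abs_le_card_mul_norm_sq (v : EuclideanSpace ℝ (Fin n)) :
    (∑ q, |v q|) ^ 2 ≤ n * ‖v‖ ^ 2 := by
  rw [EuclideanSpace.norm_sq_eq]
  simpa [Real.norm_eq_abs, sq_abs] using
    sq_sum_le_card_mul_sum_sq (s := Finset.univ) (f := fun q => |v q|)

lemma fderiv_fderiv_apply_eq_sum_secondPartial {φ : EuclideanSpace ℝ (Fin n) → ℝ}
    {ξ : EuclideanSpace ℝ (Fin n)} (hφ : DifferentiableAt ℝ (fderiv ℝ φ) ξ)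
    (u v : EuclideanSpace ℝ (Fin n)) :
    fderiv ℝ (fun w => fderiv ℝ φ w v) ξ u = ∑ q, ∑ r, u q * v r * secondPartial φ q r ξ := by
  have hflip : ∀ v, fderiv ℝ (fun w => fderiv ℝ φ w v) ξ = (fderiv ℝ (fderiv ℝ φ) ξ).flip v := by
    intro v
    rw [fderiv_clm_apply hφ (differentiableAt_const v)]
    simp
  simp only [secondPartial, hflip, ContinuousLinearMap.flip_apply]
  rw [EuclideanSpace.clm_apply_eq_sum (fderiv ℝ (fderiv ℝ φ) ξ) u, sum_apply]
  refine Finset.sum_congr rfl fun q _ => ?_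
  rw [smul_apply, EuclideanSpace.clm_apply_eq_sum _ v, Finset.smul_sum]
  simp only [smul_eq_mul, mul_assoc]

lemma abs_fderiv_fderiv_apply_self_le {φ : EuclideanSpace ℝ (Fin n) → ℝ}
    {ξ : EuclideanSpace ℝ (Fin n)} (hφ : DifferentiableAt ℝ (fderiv ℝ φ) ξ) {β : ℝ}
    (hβ0 : 0 ≤ β) (hβ : ∀ q r, |secondPartial φ q r ξ| ≤ β) (v : EuclideanSpace ℝ (Fin n)) :
    |fderiv ℝ (fun w => fderiv ℝ φ w v) ξ v| ≤ β * n * ‖v‖ ^ 2 := by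
  rw [fderiv_fderiv_apply_eq_sum_secondPartial hφ]
  calc |∑ q, ∑ r, v q * v r * secondPartial φ q r ξ|
      ≤ ∑ q, ∑ r, |v q| * |v r| * β := by
        refine (Finset.abs_sum_le_sum_abs _ _).trans (Finset.sum_le_sum fun q _ => ?_)
        refine (Finset.abs_sum_le_sum_abs _ _).trans (Finset.sum_le_sum fun r _ => ?_)
        rw [abs_mul, abs_mul]
        exact mul_le_mul_of_nonneg_left (hβ q r) (by positivity)
    _ = β * (∑ q, |v q|) ^ 2 := by
        rw [sq, Finset.sum_mul_sum, Finset.mul_sum]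
        refine Finset.sum_congr rfl fun q _ => ?_
        rw [Finset.mul_sum]
        exact Finset.sum_congr rfl fun r _ => by ring
    _ ≤ β * n * ‖v‖ ^ 2 := by
        rw [mul_assoc]
        exact mul_le_mul_of_nonneg_left (EuclideanSpace.sq_sum_abs_le_card_mul_norm_sq v) hβ0

lemma abs_sub_sub_fderiv_le_of_abs_secondPartial_le {φ : EuclideanSpace ℝ (Fin n) → ℝ}
    {y z : EuclideanSpace ℝ (Fin n)} (hφ : ∀ ξ ∈ segment ℝ y z, ContDiffAt ℝ 2 φ ξ) {β : ℝ}
    (hβ0 : 0 ≤ β) (hβ : ∀ ξ ∈ segment ℝ y z, ∀ q r, |secondPartial φ q r ξ| ≤ β) :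
    |φ z - φ y - fderiv ℝ φ y (z - y)| ≤ β * n * ‖z - y‖ ^ 2 / 2 := by
  set v := z - y
  have hγ : ∀ t ∈ Icc (0 : ℝ) 1, y + t • v ∈ segment ℝ y z := fun t ht =>
    segment_eq_image' ℝ y z ▸ mem_image_of_mem _ ht
  have hγ' : ∀ t : ℝ, HasDerivAt (fun t : ℝ => y + t • v) v t := fun t => by
    simpa using ((hasDerivAt_id t).smul_const v).const_add y
  have hφ1 : ∀ t ∈ Icc (0 : ℝ) 1, DifferentiableAt ℝ φ (y + t • v) := fun t ht =>
    (hφ _ (hγ t ht)).differentiableAt (by norm_num)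
  have hφ2 : ∀ t ∈ Icc (0 : ℝ) 1, DifferentiableAt ℝ (fderiv ℝ φ) (y + t • v) := fun t ht =>
    ((hφ _ (hγ t ht)).fderiv_right (m := 1) le_rfl).differentiableAt one_ne_zero
  have htaylor := abs_sub_sub_deriv_le_of_abs_deriv2_le (ψ := fun t => φ (y + t • v))
    (ψ' := fun t => fderiv ℝ φ (y + t • v) v)
    (ψ'' := fun t => fderiv ℝ (fun w => fderiv ℝ φ w v) (y + t • v) v)
    (fun t ht => (hφ1 t ht).hasFDerivAt.comp_hasDerivAt t (hγ' t))
    (fun t ht => HasFDerivAt.comp_hasDerivAt (l := fun w => fderiv ℝ φ w v) t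
      ((hφ2 t ht).clm_apply (differentiableAt_const v)).hasFDerivAt (hγ' t))
    (fun t ht => abs_fderiv_fderiv_apply_self_le (hφ2 t ht) hβ0 (hβ _ (hγ t ht)) v)
  simpa [v] using htaylor

lemma abs_sum_mul_apply_sub_apply_sum_smul_le
    {φ : EuclideanSpace ℝ (Fin n) → ℝ} {S : Set (EuclideanSpace ℝ (Fin n))} (hS : Convex ℝ S)
    (hφ : ∀ ξ ∈ S, ContDiffAt ℝ 2 φ ξ) {β : ℝ} (hβ0 : 0 ≤ β)
    (hβ : ∀ ξ ∈ S, ∀ q r, |secondPartial φ q r ξ| ≤ β)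
    {x : ι → EuclideanSpace ℝ (Fin n)} (hx : ∀ j, x j ∈ S)
    {α : ι → ℝ} (hα0 : ∀ j, 0 ≤ α j) (hα1 : ∑ j, α j = 1) :
    |∑ j, α j * φ (x j) - φ (∑ j, α j • x j)| ≤
      β * n / 2 * ∑ j, α j * ‖x j - ∑ i, α i • x i‖ ^ 2 := by
  set y := ∑ i, α i • x i with hy_def
  have hyS : y ∈ S := hS.sum_mem (fun j _ => hα0 j) hα1 (fun j _ => hx j)
  have hlin : ∑ j, α j * fderiv ℝ φ y (x j - y) = 0 := by
    simp only [← smul_eq_mul, ← map_smul, ← map_sum]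
    rw [hy_def, sum_smul_sub_sum_smul_eq_zero hα1, map_zero]
  have hremainder : ∀ j, |φ (x j) - φ y - fderiv ℝ φ y (x j - y)| ≤ β * n * ‖x j - y‖ ^ 2 / 2 :=
    fun j => abs_sub_sub_fderiv_le_of_abs_secondPartial_le
      (fun ξ hξ => hφ ξ (hS.segment_subset hyS (hx j) hξ)) hβ0
      (fun ξ hξ => hβ ξ (hS.segment_subset hyS (hx j) hξ))
  calc |∑ j, α j * φ (x j) - φ y|
      = |∑ j, α j * (φ (x j) - φ y - fderiv ℝ φ y (x j - y))| := by
        simp only [mul_sub, Finset.sum_sub_distrib, hlin, ← Finset.sum_mul, hα1, one_mul,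
          sub_zero]
    _ ≤ ∑ j, α j * (β * n * ‖x j - y‖ ^ 2 / 2) := by
        refine (Finset.abs_sum_le_sum_abs _ _).trans (Finset.sum_le_sum fun j _ => ?_)
        rw [abs_mul, abs_of_nonneg (hα0 j)]
        exact mul_le_mul_of_nonneg_left (hremainder j) (hα0 j)
    _ = β * n / 2 * ∑ j, α j * ‖x j - y‖ ^ 2 := by
        rw [Finset.mul_sum]
        exact Finset.sum_congr rfl fun j _ => by ring

lemma sum_mul_apply_sum_smul_le
    {g : EuclideanSpace ℝ (Fin n) → EuclideanSpace ℝ (Fin n)} {S : Set (EuclideanSpace ℝ (Fin n))}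
    (hS : Convex ℝ S) (hg : ∀ ξ ∈ S, ContDiffAt ℝ 2 g ξ) {β : ℝ} (hβ0 : 0 ≤ β)
    (hβ : ∀ ξ ∈ S, ∀ p q r, |secondPartial (fun y => g y p) q r ξ| ≤ β)
    {w l : Fin n → ℝ} (hl : ∀ i, |w i| ≤ l i)
    {x : ι → EuclideanSpace ℝ (Fin n)} (hx : ∀ j, x j ∈ S)
    {α : ι → ℝ} (hα0 : ∀ j, 0 ≤ α j) (hα1 : ∑ j, α j = 1) :
    ∑ i, w i * g (∑ j, α j • x j) i ≤ ∑ j, α j * ∑ i, w i * g (x j) i +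
      (∑ i, l i) * (β * n / 2 * ∑ j, α j * ‖x j - ∑ k, α k • x k‖ ^ 2) := by
  set ε := β * n / 2 * ∑ j, α j * ‖x j - ∑ k, α k • x k‖ ^ 2
  set y := ∑ j, α j • x j
  have hcomp : ∀ i, |∑ j, α j * g (x j) i - g y i| ≤ ε := fun i =>
    abs_sum_mul_apply_sub_apply_sum_smul_le hS
      (fun ξ hξ => (EuclideanSpace.proj i (𝕜 := ℝ)).contDiff.contDiffAt.comp ξ (hg ξ hξ)) hβ0
      (fun ξ hξ => hβ ξ hξ i) hx hα0 hα1
  calc ∑ i, w i * g y i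
      = ∑ j, α j * ∑ i, w i * g (x j) i - ∑ i, w i * (∑ j, α j * g (x j) i - g y i) := by
        simp only [mul_sub, Finset.sum_sub_distrib, Finset.mul_sum]
        rw [Finset.sum_comm]
        simp only [mul_left_comm (α _) (w _), sub_sub_cancel]
    _ ≤ ∑ j, α j * ∑ i, w i * g (x j) i + ∑ i, l i * ε := by
        have : -∑ i, w i * (∑ j, α j * g (x j) i - g y i) ≤ ∑ i, l i * ε := by
          refine (neg_le_abs _).trans ((Finset.abs_sum_le_sum_abs _ _).trans
            (Finset.sum_le_sum fun i _ => ?_))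
          rw [abs_mul]
          exact mul_le_mul (hl i) (hcomp i) (abs_nonneg _) ((abs_nonneg _).trans (hl i))
        linarith
    _ = _ := by rw [Finset.sum_mul]

lemma sum_mul_apply_sum_smul_le_sum_mul
    {g : EuclideanSpace ℝ (Fin n) → EuclideanSpace ℝ (Fin n)} {S : Set (EuclideanSpace ℝ (Fin n))}
    (hS : Convex ℝ S) (hg : ∀ ξ ∈ S, ContDiffAt ℝ 2 g ξ) {β : ℝ} (hβ0 : 0 ≤ β)
    (hβ : ∀ ξ ∈ S, ∀ p q r, |secondPartial (fun y => g y p) q r ξ| ≤ β)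
    {w l : Fin n → ℝ} (hl : ∀ i, |w i| ≤ l i)
    {x : ι → EuclideanSpace ℝ (Fin n)} (hx : ∀ j, x j ∈ S) {z : EuclideanSpace ℝ (Fin n)}
    {c : ι → ℝ} (hc : ∀ j, n / 2 * ‖x j - z‖ ^ 2 ≤ c j)
    {α : ι → ℝ} (hα0 : ∀ j, 0 ≤ α j) (hα1 : ∑ j, α j = 1) :
    ∑ i, w i * g (∑ j, α j • x j) i ≤
      ∑ j, α j * (∑ i, g (x j) i * w i + c j * β * ∑ i, l i) := by
  have hspread : n / 2 * ∑ j, α j * ‖x j - ∑ k, α k • x k‖ ^ 2 ≤ ∑ j, α j * c j :=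
    calc n / 2 * ∑ j, α j * ‖x j - ∑ k, α k • x k‖ ^ 2
        ≤ n / 2 * ∑ j, α j * ‖x j - z‖ ^ 2 := by
          rw [sum_mul_norm_sub_sq_eq hα1 x z]
          gcongr
          exact le_add_of_nonneg_right (sq_nonneg _)
      _ ≤ ∑ j, α j * c j := by
          rw [Finset.mul_sum]
          exact Finset.sum_le_sum fun j _ => by
            rw [mul_left_comm]; exact mul_le_mul_of_nonneg_left (hc j) (hα0 j)
  have hl0 : 0 ≤ ∑ i, l i := Finset.sum_nonneg fun i _ => (abs_nonneg _).trans (hl i)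
  calc ∑ i, w i * g (∑ j, α j • x j) i
      ≤ ∑ j, α j * ∑ i, w i * g (x j) i +
          (∑ i, l i) * (β * (n / 2 * ∑ j, α j * ‖x j - ∑ k, α k • x k‖ ^ 2)) := by
        simpa only [mul_div_assoc, mul_assoc] using
          sum_mul_apply_sum_smul_le hS hg hβ0 hβ hl hx hα0 hα1
    _ ≤ ∑ j, α j * ∑ i, w i * g (x j) i + (∑ i, l i) * (β * ∑ j, α j * c j) := by gcongr
    _ = ∑ j, α j * (∑ i, g (x j) i * w i + c j * β * ∑ i, l i) := by
        rw [Finset.mul_sum, Finset.mul_sum, ← Finset.sum_add_distrib]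
        refine Finset.sum_congr rfl fun j _ => ?_
        simp only [mul_comm (w _)]
        ring

lemma diniDeriv_eq_of_affine {V : EuclideanSpace ℝ (Fin n) → ℝ} {gradV : Fin n → ℝ} {ω : ℝ}
    (hV : ∀ y, V y = ∑ i, gradV i * y i + ω)
    (g : EuclideanSpace ℝ (Fin n) → EuclideanSpace ℝ (Fin n)) (y : EuclideanSpace ℝ (Fin n)) :
    diniDeriv V g y = ((∑ i, gradV i * g y i : ℝ) : EReal) := by
  have hquot : ∀ h ≠ (0 : ℝ), (V (y + h • g y) - V y) / h = ∑ i, gradV i * g y i := by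
    intro h hh
    rw [div_eq_iff hh, hV, hV]
    simp only [PiLp.add_apply, PiLp.smul_apply, smul_eq_mul, mul_add, Finset.sum_add_distrib,
      mul_left_comm (gradV _) h, ← Finset.mul_sum]
    ring
  rw [diniDeriv, limsup_congr (eventually_nhdsWithin_of_forall fun h hh => by
    rw [hquot h (ne_of_gt hh)]), limsup_const]

lemma apply_sum_smul_of_affine {V : EuclideanSpace ℝ (Fin n) → ℝ} {gradV : Fin n → ℝ} {ω : ℝ}
    (hV : ∀ y, V y = ∑ i, gradV i * y i + ω)
    {α : ι → ℝ} (hα : ∑ j, α j = 1) (x : ι → EuclideanSpace ℝ (Fin n)) :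
    V (∑ j, α j • x j) = ∑ j, α j * V (x j) := by
  simp only [hV, mul_add, Finset.sum_add_distrib, ← Finset.sum_mul, hα, one_mul, Finset.mul_sum,
    WithLp.ofLp_sum, Finset.sum_apply, PiLp.smul_apply, smul_eq_mul]
  rw [Finset.sum_comm]
  exact congrArg (· + ω) (Finset.sum_congr rfl fun j _ => Finset.sum_congr rfl fun i _ => by ring)

end EuclideanSpace

theorem stmt4_general (n : ℕ)
    (x : Fin (n + 1) → EuclideanSpace ℝ (Fin n))
    (g : EuclideanSpace ℝ (Fin n) → EuclideanSpace ℝ (Fin n))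
    (U : Set (EuclideanSpace ℝ (Fin n))) (hU : IsOpen U)
    (hσU : convexHull ℝ (Set.range x) ⊆ U)
    (hg : ContDiffOn ℝ 2 g U)
    (β : ℝ)
    (hβ : ∀ ξ ∈ convexHull ℝ (Set.range x), ∀ p q r : Fin n,
      |secondPartial (fun y => g y p) q r ξ| ≤ β)
    (V : EuclideanSpace ℝ (Fin n) → ℝ) (gradV : Fin n → ℝ) (ω : ℝ)
    (hV : ∀ y, V y = (∑ i, gradV i * y i) + ω)
    (l : Fin n → ℝ) (hl : ∀ i, |gradV i| ≤ l i)
    (c : Fin (n + 1) → ℝ)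
    (hc : ∀ j, c j = ((n : ℝ) / 2) * ‖x j - x 0‖ *
      ((⨆ k : Fin n, ‖x k.succ - x 0‖) + ‖x j - x 0‖))
    (d : Fin (n + 1) → ℝ)
    (hd : ∀ j, d j = (∑ i, g (x j) i * gradV i) + c j * β * (∑ i, l i))
    (a b₁ : ℝ) (hb₁ : 0 < b₁)
    (hlow : ∀ j, b₁ * ‖x j‖ ^ a ≤ V (x j))
    (hzero : ∀ j, x j = 0 → V (x j) = 0 ∧ d j = 0)
    (hneg : ∀ j, x j ≠ 0 → d j < 0)
    (hex : ∃ j, x j ≠ 0)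
    (bhat : ℝ)
    (hbh : bhat = sInf {t : ℝ | ∃ j, x j ≠ 0 ∧ t = -d j / V (x j)}) :
    0 < bhat ∧
      ∀ y ∈ convexHull ℝ (Set.range x), diniDeriv V g y ≤ ((-bhat * V y : ℝ) : EReal) := by
  have hVpos : ∀ j, x j ≠ 0 → 0 < V (x j) := fun j hj =>
    (mul_pos hb₁ (Real.rpow_pos_of_pos (norm_pos_iff.2 hj) a)).trans_le (hlow j)
  obtain ⟨hbhat, hdle⟩ := hbh ▸ sInf_neg_div_pos_and_le hVpos hneg hex
  obtain ⟨j₀, hj₀⟩ := hex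
  have hn : Nonempty (Fin n) := not_isEmpty_iff.1 fun h => hj₀ (by ext i; exact h.elim i)
  have hβ0 : 0 ≤ β := (abs_nonneg _).trans
    (hβ _ (subset_convexHull ℝ _ ⟨j₀, rfl⟩) hn.some hn.some hn.some)
  have hc' : ∀ j, n / 2 * ‖x j - x 0‖ ^ 2 ≤ c j := fun j => by
    rw [hc j, sq, ← mul_assoc]
    exact mul_le_mul_of_nonneg_left
      (le_add_of_nonneg_left (Real.iSup_nonneg fun k => norm_nonneg _)) (by positivity)
  refine ⟨hbhat, fun y hy => ?_⟩
  obtain ⟨α, hα0, hα1, rfl⟩ := exists_weights_of_mem_convexHull_range hy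
  rw [diniDeriv_eq_of_affine hV, EReal.coe_le_coe_iff, apply_sum_smul_of_affine hV hα1,
    Finset.mul_sum]
  calc ∑ i, gradV i * g (∑ j, α j • x j) i ≤ ∑ j, α j * d j := by
        simpa only [hd] using sum_mul_apply_sum_smul_le_sum_mul (convex_convexHull ℝ _)
          (fun ξ hξ => hg.contDiffAt (hU.mem_nhds (hσU hξ))) hβ0 hβ hl
          (fun j => subset_convexHull ℝ _ ⟨j, rfl⟩) hc' hα0 hα1
    _ ≤ ∑ j, -bhat * (α j * V (x j)) := Finset.sum_le_sum fun j _ => by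
        rw [mul_left_comm]
        refine mul_le_mul_of_nonneg_left ?_ (hα0 j)
        by_cases hj : x j = 0
        · rw [(hzero j hj).1, (hzero j hj).2, mul_zero]
        · exact hdle j hj

/-- strict per-vertex decrease gives `b̂₂ > 0` and
`D⁺V(x) ≤ −b̂₂ V(x)` on the simplex, with `b̂₂ = min { −d_j / V(x_j) : x_j ≠ 0 }`. -/
theorem stmt4 (n : ℕ)
    (x : Fin (n + 1) → EuclideanSpace ℝ (Fin n))
    (hx : LinearIndependent ℝ (fun j : Fin n => x j.succ - x 0))
    (g : EuclideanSpace ℝ (Fin n) → EuclideanSpace ℝ (Fin n))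
    (U : Set (EuclideanSpace ℝ (Fin n))) (hU : IsOpen U)
    (hσU : convexHull ℝ (Set.range x) ⊆ U)
    (hg : ContDiffOn ℝ 2 g U)
    (β : ℝ)
    (hβ : ∀ ξ ∈ convexHull ℝ (Set.range x), ∀ p q r : Fin n,
      |secondPartial (fun y => g y p) q r ξ| ≤ β)
    (V : EuclideanSpace ℝ (Fin n) → ℝ) (gradV : Fin n → ℝ) (ω : ℝ)
    (hV : ∀ y, V y = (∑ i, gradV i * y i) + ω)
    (l : Fin n → ℝ) (hl : ∀ i, |gradV i| ≤ l i)
    (c : Fin (n + 1) → ℝ)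
    (hc : ∀ j, c j = ((n : ℝ) / 2) * ‖x j - x 0‖ *
      ((⨆ k : Fin n, ‖x k.succ - x 0‖) + ‖x j - x 0‖))
    (d : Fin (n + 1) → ℝ)
    (hd : ∀ j, d j = (∑ i, g (x j) i * gradV i) + c j * β * (∑ i, l i))
    (a b₁ : ℝ) (ha : 0 < a) (hb₁ : 0 < b₁)
    (hlow : ∀ j, b₁ * ‖x j‖ ^ a ≤ V (x j))
    (hzero : ∀ j, x j = 0 → V (x j) = 0 ∧ d j = 0)
    (hneg : ∀ j, x j ≠ 0 → d j < 0)
    (hex : ∃ j, x j ≠ 0)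
    (bhat : ℝ)
    (hbh : bhat = sInf {t : ℝ | ∃ j, x j ≠ 0 ∧ t = -d j / V (x j)}) :
    0 < bhat ∧
      ∀ y ∈ convexHull ℝ (Set.range x), diniDeriv V g y ≤ ((-bhat * V y : ℝ) : EReal) :=
  stmt4_general n x g U hU hσU hg β hβ V gradV ω hV l hl c hc d hd a b₁ hb₁ hlow hzero hneg hex bhat
    hbh
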